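/- Sub-Pfaffians of the anti-transpose: let N be a skew-symmetric m×m matrix over ℂ and N̂ its anti-transpose (N̂_{i,j} = N_{m−1−j, m−1−i} for i, j ∈ Fin m, 0-indexed). For every finset I ⊆ Fin m of even cardinality 2k, let Ĩ = {m−1−i : i ∈ I} be the image of I under index reversal. Then pf(N̂_{Ĩ}) = pf(N_I), where N_I denotes the principal submatrix of N on I with rows and columns taken in increasing order of index (and likewise for N̂_{Ĩ}). -/
import Mathlib


open Matrix

/-- The Pfaffian of a `2n × 2n` matrix over `ℂ`, given by the averaged sum over all
permutations: `pf A = (1 / (2^n n!)) ∑_σ sign σ ∏_i A (σ (2i)) (σ (2i+1))`. -/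
noncomputable def pf {n : ℕ} (A : Matrix (Fin (2 * n)) (Fin (2 * n)) ℂ) : ℂ :=
  (1 / (2 ^ n * (n.factorial : ℂ))) *
    ∑ σ : Equiv.Perm (Fin (2 * n)),
      ((Equiv.Perm.sign σ : ℤ) : ℂ) *
        ∏ i : Fin n,
          A (σ ⟨2 * i.val, by have := i.isLt; omega⟩)
            (σ ⟨2 * i.val + 1, by have := i.isLt; omega⟩)

/-- The anti-transpose of a matrix: reflection across the anti-diagonal,
`N̂ i j = N (rev j) (rev i)`. -/
def antiTranspose {m : ℕ} (N : Matrix (Fin m) (Fin m) ℂ) : Matrix (Fin m) (Fin m) ℂ :=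
  Matrix.of fun i j => N j.rev i.rev

lemma pf_antiTranspose {k : ℕ} (M : Matrix (Fin (2 * k)) (Fin (2 * k)) ℂ) :
    pf (antiTranspose M) = pf M := by
  unfold pf
  congr 1
  have hinv : Function.Involutive
      (fun τ : Equiv.Perm (Fin (2 * k)) => Fin.revPerm * τ * Fin.revPerm) := by
    intro τ
    ext x
    simp [Equiv.Perm.mul_apply]
  refine Fintype.sum_bijective _ hinv.bijective _ _ fun τ => ?_
  have hsign : Equiv.Perm.sign (Fin.revPerm * τ * Fin.revPerm) = Equiv.Perm.sign τ := by
    simp only [_root_.map_mul]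
    rw [mul_comm, ← mul_assoc, Int.units_mul_self, one_mul]
  rw [hsign]
  congr 1
  refine Fintype.prod_bijective Fin.rev Fin.rev_bijective _ _ fun i => ?_
  have ha : (⟨2 * (i.rev).val, by have := i.rev.isLt; omega⟩ : Fin (2 * k)).rev
      = ⟨2 * i.val + 1, by have := i.isLt; omega⟩ := by
    ext
    simp [Fin.rev]
    omega
  have hb : (⟨2 * (i.rev).val + 1, by have := i.rev.isLt; omega⟩ : Fin (2 * k)).rev
      = ⟨2 * i.val, by have := i.isLt; omega⟩ := by
    ext
    simp [Fin.rev]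
    omega
  simp only [antiTranspose, Matrix.of_apply, Equiv.Perm.mul_apply, Fin.revPerm_apply,
    Fin.rev_rev, ha, hb]

/-- Sub-Pfaffians of the anti-transpose: for a skew-symmetric `N` and a finset `I` of even
cardinality `2k`, the Pfaffian of the principal submatrix of `N̂` on the reversed index set
`Ĩ = {m-1-i : i ∈ I}` equals the Pfaffian of the principal submatrix of `N` on `I`. -/
theorem pf_submatrix_antiTranspose {m k : ℕ} (N : Matrix (Fin m) (Fin m) ℂ) (hN : Nᵀ = -N)
    (I : Finset (Fin m)) (hI : I.card = 2 * k) :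
    pf ((antiTranspose N).submatrix
        ((I.image Fin.rev).orderEmbOfFin
          ((Finset.card_image_of_injective I Fin.rev_injective).trans hI))
        ((I.image Fin.rev).orderEmbOfFin
          ((Finset.card_image_of_injective I Fin.rev_injective).trans hI))) =
      pf (N.submatrix (I.orderEmbOfFin hI) (I.orderEmbOfFin hI)) := by
  set e := I.orderEmbOfFin hI
  set h' := (Finset.card_image_of_injective I Fin.rev_injective).trans hI
  have hf : ∀ j : Fin (2 * k), (I.image Fin.rev).orderEmbOfFin h' j = (e j.rev).rev := by
    intro j
    have hu := Finset.orderEmbOfFin_unique h'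
      (f := fun j : Fin (2 * k) => (e j.rev).rev) ?_ ?_
    · exact (congrFun hu j).symm
    · intro i
      exact Finset.mem_image_of_mem _ (Finset.orderEmbOfFin_mem I hI i.rev)
    · intro a b hab
      rw [Fin.rev_lt_rev]
      exact e.strictMono (by rwa [Fin.rev_lt_rev])
  have hmat : (antiTranspose N).submatrix ((I.image Fin.rev).orderEmbOfFin h')
      ((I.image Fin.rev).orderEmbOfFin h') = antiTranspose (N.submatrix e e) := by
    ext i j
    simp [Matrix.submatrix_apply, hf, antiTranspose, Fin.rev_rev]
  rw [hmat, pf_antiTranspose]
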